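/- Let V be a finite-dimensional real vector space equipped with null data (γ, ℓ, ℓ⁽²⁾, P, n, n⁽²⁾ = 0) satisfying the four contraction identities, and let S ⊂ V be a codimension-one subspace with n ∉ S, so that h := γ restricted to S × S is nondegenerate. Let U be a symmetric bilinear form on V with U(n,·) = 0. Then tr_P U = tr_h U_∥, i.e., the trace of the endomorphism X ↦ P(U(X,·),·) of V equals the trace of the endomorphism of S obtained by composing the inverse of h with the restriction U_∥ of U to S × S. -/

import Mathlib

open Module

/-- The vector of `V` corresponding to `P(ρ,·) ∈ V**`, via the canonical
identification `V ≅ V**`. -/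
noncomputable def Pvec {V : Type*} [AddCommGroup V] [Module ℝ V] [FiniteDimensional ℝ V]
    (P : LinearMap.BilinForm ℝ (Module.Dual ℝ V)) (ρ : Module.Dual ℝ V) : V :=
  (Module.evalEquiv ℝ V).symm (P ρ)

/-- `tr_P T`: the trace of the endomorphism `X ↦ P(T(X,·),·)` of `V`. -/
noncomputable def trP {V : Type*} [AddCommGroup V] [Module ℝ V] [FiniteDimensional ℝ V]
    (P : LinearMap.BilinForm ℝ (Module.Dual ℝ V)) (T : LinearMap.BilinForm ℝ V) : ℝ :=
  LinearMap.trace ℝ V ((Module.evalEquiv ℝ V).symm.toLinearMap ∘ₗ P ∘ₗ T)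

/-!
Let `G` be the endomorphism `X ↦ P(U(X,·),·)`, so that `tr_P U = tr G`. The contraction identity
`P(γ(X,·),·) + ℓ(X) n = X` and the symmetry of `P` give `γ(Y, G X) = U(X, Y) - ℓ(Y) U(X, n)`,
which is `U(X, Y)` since `U(n,·) = 0`. The same identity shows `Rad γ ⊆ span{n}`, so `γ` restricts
to a nondegenerate form on the complement `S` of `span{n}`, and `F` is the compression of `G` to
`S` along `span{n}`. Since `G n = 0`, `G` factors through this projection, and the trace of
`G` equals that of its compression by cyclicity of the trace.
-/

namespace Submodule

variable {K V : Type*} [Field K] [AddCommGroup V] [Module K V] [FiniteDimensional K V]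

theorem isCompl_span_singleton_of_finrank_add_one {S : Submodule K V} {n : V}
    (hcodim : finrank K S + 1 = finrank K V) (hnS : n ∉ S) : IsCompl S (K ∙ n) := by
  have hn : n ≠ 0 := fun h => hnS (h ▸ S.zero_mem)
  refine (isCompl_iff_disjoint _ _ ?_).mpr (disjoint_span_singleton_of_notMem hnS)
  rw [finrank_span_singleton hn, hcodim]

end Submodule

namespace LinearMap

theorem comp_subtype_comp_projectionOnto {R E F : Type*} [Ring R] [AddCommGroup E] [Module R E]
    [AddCommGroup F] [Module R F] {p q : Submodule R E} (h : IsCompl p q) {f : E →ₗ[R] F}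
    (hf : q ≤ ker f) : (f ∘ₗ p.subtype) ∘ₗ p.projectionOnto q h = f := by
  ext x
  have hx : f (x - p.projection q h x) = 0 := hf (Submodule.sub_projection_mem h x)
  rw [map_sub, sub_eq_zero] at hx
  exact hx.symm

theorem trace_eq_trace_compression {K V : Type*} [Field K] [AddCommGroup V] [Module K V]
    [FiniteDimensional K V] {p q : Submodule K V} (h : IsCompl p q) {f : V →ₗ[K] V}
    (hf : q ≤ ker f) : trace K V f = trace K p (p.projectionOnto q h ∘ₗ f ∘ₗ p.subtype) := by
  conv_lhs => rw [← comp_subtype_comp_projectionOnto h hf]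
  exact trace_comp_comm' _ _

end LinearMap

section NullData

variable {V : Type*} [AddCommGroup V] [Module ℝ V] [FiniteDimensional ℝ V]

noncomputable def raiseIndex (P : LinearMap.BilinForm ℝ (Dual ℝ V))
    (T : LinearMap.BilinForm ℝ V) : Module.End ℝ V :=
  (evalEquiv ℝ V).symm.toLinearMap ∘ₗ P ∘ₗ T

theorem raiseIndex_apply (P : LinearMap.BilinForm ℝ (Dual ℝ V)) (T : LinearMap.BilinForm ℝ V)
    (X : V) : raiseIndex P T X = Pvec P (T X) :=
  rfl

theorem trP_eq_trace_raiseIndex (P : LinearMap.BilinForm ℝ (Dual ℝ V))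
    (T : LinearMap.BilinForm ℝ V) : trP P T = LinearMap.trace ℝ V (raiseIndex P T) :=
  rfl

theorem apply_Pvec (P : LinearMap.BilinForm ℝ (Dual ℝ V)) (ρ α : Dual ℝ V) :
    α (Pvec P ρ) = P ρ α := by
  simp [Pvec]

variable {γ : LinearMap.BilinForm ℝ V} {ℓ : Dual ℝ V} {P : LinearMap.BilinForm ℝ (Dual ℝ V)}
  {n : V}

theorem mem_span_singleton_of_bilin_eq_zero (h4 : ∀ X : V, Pvec P (γ X) + ℓ X • n = X) {x : V}
    (hx : γ x = 0) : x ∈ ℝ ∙ n := by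
  have hx' := h4 x
  rw [hx, Pvec, map_zero, map_zero, zero_add] at hx'
  exact Submodule.mem_span_singleton.mpr ⟨ℓ x, hx'⟩

theorem bilin_apply_Pvec (hPsym : ∀ α β, P α β = P β α)
    (h4 : ∀ X : V, Pvec P (γ X) + ℓ X • n = X) (ρ : Dual ℝ V) (Y : V) :
    γ Y (Pvec P ρ) = ρ Y - ℓ Y * ρ n := by
  rw [apply_Pvec, hPsym, ← apply_Pvec, eq_sub_of_add_eq (h4 Y), map_sub, map_smul, smul_eq_mul]

theorem bilin_raiseIndex (hγsym : ∀ X Y : V, γ X Y = γ Y X) (hPsym : ∀ α β, P α β = P β α)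
    (h4 : ∀ X : V, Pvec P (γ X) + ℓ X • n = X) {T : LinearMap.BilinForm ℝ V}
    (hTn : ∀ X, T X n = 0) (X Y : V) : γ (raiseIndex P T X) Y = T X Y := by
  rw [hγsym, raiseIndex_apply, bilin_apply_Pvec hPsym h4, hTn, mul_zero, sub_zero]

theorem separatingLeft_restrict (hγsym : ∀ X Y : V, γ X Y = γ Y X)
    (h4 : ∀ X : V, Pvec P (γ X) + ℓ X • n = X) (hγn : γ n = 0) {S : Submodule ℝ V}
    (hcompl : IsCompl S (ℝ ∙ n)) : (γ.restrict S).SeparatingLeft := by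
  intro x hx
  have hker : ℝ ∙ n ≤ LinearMap.ker (γ x) := by
    rw [Submodule.span_singleton_le_iff_mem, LinearMap.mem_ker, hγsym, hγn, LinearMap.zero_apply]
  have hγx : γ x = 0 := by
    rw [← LinearMap.comp_subtype_comp_projectionOnto hcompl hker]
    ext y
    exact hx (S.projectionOnto (ℝ ∙ n) hcompl y)
  have hxS : (x : V) ∈ S ⊓ (ℝ ∙ n) := ⟨x.2, mem_span_singleton_of_bilin_eq_zero h4 hγx⟩
  rw [hcompl.inf_eq_bot, Submodule.mem_bot] at hxS
  exact Subtype.ext hxS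

end NullData

theorem trP_eq_trh_restrict_general {V : Type*} [AddCommGroup V] [Module ℝ V]
    [FiniteDimensional ℝ V]
    (γ : LinearMap.BilinForm ℝ V) (hγsym : ∀ X Y : V, γ X Y = γ Y X)
    (ℓ : Module.Dual ℝ V)
    (P : LinearMap.BilinForm ℝ (Module.Dual ℝ V)) (hPsym : ∀ α β, P α β = P β α)
    (n : V) (n2 : ℝ) (hn2 : n2 = 0)
    (h1 : γ n + n2 • ℓ = 0)
    (h4 : ∀ X : V, Pvec P (γ X) + ℓ X • n = X)
    (S : Submodule ℝ V)
    (hcodim : Module.finrank ℝ S + 1 = Module.finrank ℝ V) (hnS : n ∉ S)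
    (U : LinearMap.BilinForm ℝ V) (hUsym : ∀ X Y : V, U X Y = U Y X)
    (hUn : U n = 0) :
    (∃! F : S →ₗ[ℝ] S, ∀ x y : S, γ (F x : V) (y : V) = U (x : V) (y : V)) ∧
    (∀ F : S →ₗ[ℝ] S, (∀ x y : S, γ (F x : V) (y : V) = U (x : V) (y : V)) →
      trP P U = LinearMap.trace ℝ S F) := by
  subst hn2
  have hγn : γ n = 0 := by simpa using h1
  have hcompl := Submodule.isCompl_span_singleton_of_finrank_add_one hcodim hnS
  have hUn' : ∀ X, U X n = 0 := fun X => by rw [hUsym, hUn, LinearMap.zero_apply]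
  have hγker : ℝ ∙ n ≤ LinearMap.ker γ := by
    rwa [Submodule.span_singleton_le_iff_mem, LinearMap.mem_ker]
  have hGker : ℝ ∙ n ≤ LinearMap.ker (raiseIndex P U) := by
    rw [Submodule.span_singleton_le_iff_mem, LinearMap.mem_ker, raiseIndex_apply, hUn, Pvec,
      map_zero, map_zero]
  set F₀ := S.projectionOnto (ℝ ∙ n) hcompl ∘ₗ raiseIndex P U ∘ₗ S.subtype
  have hF₀ : ∀ x y : S, γ (F₀ x : V) (y : V) = U (x : V) (y : V) := fun x y => by
    rw [← bilin_raiseIndex hγsym hPsym h4 hUn']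
    conv_rhs => rw [← LinearMap.comp_subtype_comp_projectionOnto hcompl hγker]
    rfl
  have huniq : ∀ F : S →ₗ[ℝ] S, (∀ x y : S, γ (F x : V) (y : V) = U (x : V) (y : V)) →
      F = F₀ := fun F hF => LinearMap.ext fun x =>
    sub_eq_zero.mp <| separatingLeft_restrict hγsym h4 hγn hcompl _ fun y => by
      simp [hF, hF₀]
  refine ⟨⟨F₀, hF₀, huniq⟩, fun F hF => ?_⟩
  rw [huniq F hF, trP_eq_trace_raiseIndex, LinearMap.trace_eq_trace_compression hcompl hGker]

/-- For null hypersurface data and a transverse codimension-one subspace `S`, and a symmetric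
bilinear form `U` with `U(n,·) = 0`: there is a unique endomorphism `F` of `S` with
`h(F x, y) = U(x,y)` (i.e. `F = h⁻¹ ∘ U_∥`), and its trace equals `tr_P U`;
that is, `tr_P U = tr_h U_∥`. -/
theorem trP_eq_trh_restrict {V : Type*} [AddCommGroup V] [Module ℝ V]
    [FiniteDimensional ℝ V]
    (γ : LinearMap.BilinForm ℝ V) (hγsym : ∀ X Y : V, γ X Y = γ Y X)
    (ℓ : Module.Dual ℝ V) (ℓ2 : ℝ)
    (P : LinearMap.BilinForm ℝ (Module.Dual ℝ V)) (hPsym : ∀ α β, P α β = P β α)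
    (n : V) (n2 : ℝ) (hn2 : n2 = 0)
    (h1 : γ n + n2 • ℓ = 0)
    (h2 : ℓ n + n2 * ℓ2 = 1)
    (h3 : Pvec P ℓ + ℓ2 • n = 0)
    (h4 : ∀ X : V, Pvec P (γ X) + ℓ X • n = X)
    (S : Submodule ℝ V)
    (hcodim : Module.finrank ℝ S + 1 = Module.finrank ℝ V) (hnS : n ∉ S)
    (U : LinearMap.BilinForm ℝ V) (hUsym : ∀ X Y : V, U X Y = U Y X)
    (hUn : U n = 0) :
    (∃! F : S →ₗ[ℝ] S, ∀ x y : S, γ (F x : V) (y : V) = U (x : V) (y : V)) ∧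
    (∀ F : S →ₗ[ℝ] S, (∀ x y : S, γ (F x : V) (y : V) = U (x : V) (y : V)) →
      trP P U = LinearMap.trace ℝ S F) :=
  trP_eq_trh_restrict_general γ hγsym ℓ P hPsym n n2 hn2 h1 h4 S hcodim hnS U hUsym hUn
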